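/- arXiv:1304.0157 — 3 statements merged into one kernel-verified Lean document; each statement's English description precedes it below -/
import Mathlib

section
/- Let m < M be real numbers, let J be an interval containing [m, M], and let f : J → ℝ be a continuous convex function. Let A, B, C, D ∈ σ(J) satisfy A + D = B + C, A ≤ m·I, m·I ≤ B ≤ M·I, m·I ≤ C ≤ M·I and M·I ≤ D. If Φ is a unital positive linear map on B(H), then f(Φ(B)) + f(Φ(C)) ≤ Φ(f(A)) + Φ(f(D)) − δ_f · X̃ ≤ Φ(f(A)) + Φ(f(D)), where X̃ = I − (1/(M−m))·( |Φ(B) − ((m+M)/2)·I| + |Φ(C) − ((m+M)/2)·I| ). -/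
/-!
Let `ℓ` be the secant line of `f` through `(m, f m)` and `(M, f M)`, and `c = (m + M) / 2`.
Convexity puts `f` above `ℓ` outside `(m, M)`, and on `[m, M]` below the piecewise linear
interpolation of `f` at `m, c, M`, which is `ℓ x - δ_f (1/2 - |x - c| / (M - m))`.
The functional calculus turns these into `ℓ(A) ≤ f(A)`, `ℓ(D) ≤ f(D)` and
`f(T) ≤ ℓ(T) - δ_f (1/2 - |T - c| / (M - m))` for `T = Φ(B), Φ(C)`, whose spectra lie in
`[m, M]` because `Φ` is positive and unital. As `ℓ` is affine and `Φ` is linear and unital,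
`ℓ(Φ B) + ℓ(Φ C) = Φ(ℓ(A)) + Φ(ℓ(D))` by `A + D = B + C`, which chains the three bounds.
The second inequality holds since `δ_f ≥ 0` and `|Φ B - c|, |Φ C - c| ≤ (M - m) / 2`.
-/

/-- The absolute value of a (self-adjoint) bounded operator, via the
continuous functional calculus. -/
noncomputable def opAbs {H : Type*} [NormedAddCommGroup H] [InnerProductSpace ℂ H]
    [CompleteSpace H] (A : H →L[ℂ] H) : H →L[ℂ] H :=
  cfc (fun t : ℝ => |t|) A

open Set

theorem ConvexOn.sub_mul_le_of_mem_Icc {𝕜 : Type*} [Field 𝕜] [LinearOrder 𝕜]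
    [IsStrictOrderedRing 𝕜] {s : Set 𝕜} {f : 𝕜 → 𝕜} (hf : ConvexOn 𝕜 s f) {x y z : 𝕜}
    (hx : x ∈ s) (hz : z ∈ s) (hy : y ∈ Icc x z) :
    (z - x) * f y ≤ (z - y) * f x + (y - x) * f z := by
  rcases hy.1.eq_or_lt with rfl | hxy
  · simp
  rcases hy.2.eq_or_lt with rfl | hyz
  · simp
  exact hf.secant_mono_aux1 hx hz hxy hyz

section Scalar

variable {s : Set ℝ} {f : ℝ → ℝ} {m M a b : ℝ}

theorem ConvexOn.two_mul_map_midpoint_le (hf : ConvexOn ℝ s f) {x y : ℝ} (hx : x ∈ s)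
    (hy : y ∈ s) : 2 * f ((x + y) / 2) ≤ f x + f y := by
  have h := hf.2 hx hy (by norm_num : (0 : ℝ) ≤ 2⁻¹) (by norm_num : (0 : ℝ) ≤ 2⁻¹) (by norm_num)
  rw [smul_eq_mul, smul_eq_mul, ← mul_add, inv_mul_eq_div] at h
  simp only [smul_eq_mul] at h
  linarith

/-- The right-hand side is the piecewise linear interpolation of `f` at `m`, `(m + M) / 2`, `M`. -/
theorem ConvexOn.le_affine_sub_tent (hf : ConvexOn ℝ s f) (hmM : m < M) (hs : Icc m M ⊆ s)
    (ham : a * m + b = f m) (haM : a * M + b = f M) {x : ℝ} (hx : x ∈ Icc m M) :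
    f x ≤ a * x + b -
      (f m + f M - 2 * f ((m + M) / 2)) * (2⁻¹ - (M - m)⁻¹ * |x - (m + M) / 2|) := by
  obtain ⟨hmx, hxM⟩ := hx
  have hc : (m + M) / 2 ∈ s := hs ⟨by linarith, by linarith⟩
  have hMm : 0 < M - m := sub_pos.mpr hmM
  rcases le_total x ((m + M) / 2) with hxc | hcx
  · have h := hf.sub_mul_le_of_mem_Icc (hs ⟨le_rfl, hmM.le⟩) hc ⟨hmx, hxc⟩
    rw [abs_of_nonpos (by linarith)]
    field_simp
    linear_combination 4 * h - 2 * (M - x) * ham - 2 * (x - m) * haM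
  · have h := hf.sub_mul_le_of_mem_Icc hc (hs ⟨hmM.le, le_rfl⟩) ⟨hcx, hxM⟩
    rw [abs_of_nonneg (by linarith)]
    field_simp
    linear_combination 4 * h - 2 * (M - x) * ham - 2 * (x - m) * haM

theorem ConvexOn.affine_le_of_le_or_le (hf : ConvexOn ℝ s f) (hmM : m < M) (hm : m ∈ s)
    (hM : M ∈ s) (ham : a * m + b = f m) (haM : a * M + b = f M) {x : ℝ} (hxs : x ∈ s)
    (hx : x ≤ m ∨ M ≤ x) : a * x + b ≤ f x := by
  refine le_of_mul_le_mul_left ?_ (sub_pos.mpr hmM)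
  rcases hx with hxm | hMx
  · have h := hf.sub_mul_le_of_mem_Icc hxs hM ⟨hxm, hmM.le⟩
    linear_combination h + (M - x) * ham + (x - m) * haM
  · have h := hf.sub_mul_le_of_mem_Icc hm hxs ⟨hmM.le, hMx⟩
    linear_combination h + (M - x) * ham + (x - m) * haM

end Scalar

section Operator

variable {𝒜 : Type*} [CStarAlgebra 𝒜]

lemma cfc_affine (a b : ℝ) {T : 𝒜} (hT : IsSelfAdjoint T) :
    cfc (fun x : ℝ ↦ a * x + b) T = a • T + b • 1 := by
  rw [cfc_add_const b _ T, cfc_const_mul a _ T, cfc_id' ℝ T, Algebra.algebraMap_eq_smul_one]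

lemma cfc_abs_sub_const (c : ℝ) {T : 𝒜} (hT : IsSelfAdjoint T) :
    cfc (fun x : ℝ ↦ |x - c|) T = cfc (fun x : ℝ ↦ |x|) (T - c • 1) := by
  have hsub : T - c • 1 = cfc (fun x : ℝ ↦ x - c) T := by
    rw [cfc_sub (fun x : ℝ ↦ x) (fun _ ↦ c) T, cfc_id' ℝ T, cfc_const c T,
      Algebra.algebraMap_eq_smul_one]
  rw [hsub, ← cfc_comp (fun x : ℝ ↦ |x|) (fun x : ℝ ↦ x - c) T]
  rfl

variable [PartialOrder 𝒜] [StarOrderedRing 𝒜]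

lemma isSelfAdjoint_of_smul_one_le {r : ℝ} {T : 𝒜} (h : r • 1 ≤ T) : IsSelfAdjoint T :=
  IsSelfAdjoint.of_ge h (.smul (.all r) (.one 𝒜))

lemma isSelfAdjoint_of_le_smul_one {r : ℝ} {T : 𝒜} (h : T ≤ r • 1) : IsSelfAdjoint T :=
  IsSelfAdjoint.of_le h (.smul (.all r) (.one 𝒜))

lemma spectrum_subset_Ici_of_smul_one_le {r : ℝ} {T : 𝒜} (h : r • 1 ≤ T) :
    spectrum ℝ T ⊆ Ici r := by
  have hT := isSelfAdjoint_of_smul_one_le h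
  rw [← Algebra.algebraMap_eq_smul_one, algebraMap_le_iff_le_spectrum hT] at h
  exact h

lemma spectrum_subset_Iic_of_le_smul_one {r : ℝ} {T : 𝒜} (h : T ≤ r • 1) :
    spectrum ℝ T ⊆ Iic r := by
  have hT := isSelfAdjoint_of_le_smul_one h
  rw [← Algebra.algebraMap_eq_smul_one, le_algebraMap_iff_spectrum_le hT] at h
  exact h

lemma spectrum_subset_Icc_of_mem_Icc_smul_one {m M : ℝ} {T : 𝒜} (hT : T ∈ Icc (m • 1) (M • 1)) :
    spectrum ℝ T ⊆ Icc m M := fun _ hx ↦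
  ⟨spectrum_subset_Ici_of_smul_one_le hT.1 hx, spectrum_subset_Iic_of_le_smul_one hT.2 hx⟩

variable {s : Set ℝ} {f : ℝ → ℝ} {m M a b : ℝ}

lemma cfc_le_affine_sub_tent (hf : ConvexOn ℝ s f) (hmM : m < M) (hs : Icc m M ⊆ s)
    (hfc : ContinuousOn f (Icc m M)) (ham : a * m + b = f m) (haM : a * M + b = f M)
    {T : 𝒜} (hT : T ∈ Icc (m • 1) (M • 1)) :
    cfc f T ≤ a • T + b • 1 - (f m + f M - 2 * f ((m + M) / 2)) •
      ((2⁻¹ : ℝ) • 1 - (M - m)⁻¹ • cfc (fun x : ℝ ↦ |x|) (T - ((m + M) / 2) • 1)) := by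
  have hTsa := isSelfAdjoint_of_smul_one_le hT.1
  have hspec := spectrum_subset_Icc_of_mem_Icc_smul_one hT
  calc cfc f T ≤ cfc (fun x ↦ a * x + b - (f m + f M - 2 * f ((m + M) / 2)) *
        (2⁻¹ - (M - m)⁻¹ * |x - (m + M) / 2|)) T :=
        cfc_mono (fun x hx ↦ hf.le_affine_sub_tent hmM hs ham haM (hspec hx)) (hfc.mono hspec)
    _ = _ := by
      rw [cfc_sub _ _ _, cfc_affine a b hTsa, cfc_const_mul _ _ T, cfc_sub (fun _ ↦ (2⁻¹ : ℝ)) _ T,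
        cfc_const _ T, cfc_const_mul _ _ T, cfc_abs_sub_const _ hTsa,
        Algebra.algebraMap_eq_smul_one]

lemma affine_le_cfc (hf : ConvexOn ℝ s f) (hmM : m < M) (hm : m ∈ s) (hM : M ∈ s)
    (hfc : ContinuousOn f s) (ham : a * m + b = f m) (haM : a * M + b = f M) {T : 𝒜}
    (hTs : spectrum ℝ T ⊆ s) (hT : T ≤ m • 1 ∨ M • 1 ≤ T) :
    a • T + b • 1 ≤ cfc f T := by
  have hTsa : IsSelfAdjoint T :=
    hT.elim isSelfAdjoint_of_le_smul_one isSelfAdjoint_of_smul_one_le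
  rw [← cfc_affine a b hTsa]
  refine cfc_mono (fun x hx ↦ hf.affine_le_of_le_or_le hmM hm hM ham haM (hTs hx) ?_)
    (by fun_prop) (hfc.mono hTs)
  exact hT.imp (fun h ↦ spectrum_subset_Iic_of_le_smul_one h hx)
    (fun h ↦ spectrum_subset_Ici_of_smul_one_le h hx)

lemma cfc_abs_sub_midpoint_le {T : 𝒜} (hT : T ∈ Icc (m • 1) (M • 1)) :
    cfc (fun x : ℝ ↦ |x|) (T - ((m + M) / 2) • 1) ≤ ((M - m) / 2) • 1 := by
  have hTsa := isSelfAdjoint_of_smul_one_le hT.1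
  have hspec := spectrum_subset_Icc_of_mem_Icc_smul_one hT
  rw [← cfc_abs_sub_const _ hTsa, ← Algebra.algebraMap_eq_smul_one, cfc_le_algebraMap_iff _ _ T]
  intro x hx
  obtain ⟨hmx, hxM⟩ := hspec hx
  rw [abs_le]
  constructor <;> linarith

/-- The operator `X̃` of the paper. -/
noncomputable def midpointWeight (m M : ℝ) (P Q : 𝒜) : 𝒜 :=
  1 - (M - m)⁻¹ • (cfc (fun x : ℝ ↦ |x|) (P - ((m + M) / 2) • 1) +
    cfc (fun x : ℝ ↦ |x|) (Q - ((m + M) / 2) • 1))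

lemma midpointWeight_nonneg (hmM : m < M) {P Q : 𝒜} (hP : P ∈ Icc (m • 1) (M • 1))
    (hQ : Q ∈ Icc (m • 1) (M • 1)) : 0 ≤ midpointWeight m M P Q := by
  have hsum := add_le_add (cfc_abs_sub_midpoint_le hP) (cfc_abs_sub_midpoint_le hQ)
  have hMm : M - m ≠ 0 := (sub_pos.mpr hmM).ne'
  have h := smul_nonneg (inv_nonneg.mpr (sub_pos.mpr hmM).le) (sub_nonneg.mpr hsum)
  rw [midpointWeight]
  convert h using 1
  rw [smul_sub, ← add_smul, smul_smul]
  field_simp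
  module

lemma cfc_add_cfc_le (hf : ConvexOn ℝ s f) (hmM : m < M) (hs : Icc m M ⊆ s)
    (hfc : ContinuousOn f (Icc m M)) (ham : a * m + b = f m) (haM : a * M + b = f M)
    {P Q : 𝒜} (hP : P ∈ Icc (m • 1) (M • 1)) (hQ : Q ∈ Icc (m • 1) (M • 1)) :
    cfc f P + cfc f Q ≤ a • (P + Q) + (2 * b) • 1 -
      (f m + f M - 2 * f ((m + M) / 2)) • midpointWeight m M P Q := by
  refine (add_le_add (cfc_le_affine_sub_tent hf hmM hs hfc ham haM hP)
    (cfc_le_affine_sub_tent hf hmM hs hfc ham haM hQ)).trans_eq ?_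
  rw [midpointWeight]
  module

end Operator

theorem jensen_type_unital_map_general {H : Type*} [NormedAddCommGroup H] [InnerProductSpace ℂ H]
    [CompleteSpace H] (m M : ℝ) (hmM : m < M) (J : Set ℝ)
    (hJmM : Set.Icc m M ⊆ J) (f : ℝ → ℝ) (hf : ContinuousOn f J) (hconv : ConvexOn ℝ J f)
    (A B C D : H →L[ℂ] H)
    (hAspec : spectrum ℝ A ⊆ J)
    (hDspec : spectrum ℝ D ⊆ J)
    (hADBC : A + D = B + C)
    (hA : A ≤ m • 1) (hBl : m • 1 ≤ B) (hBu : B ≤ M • 1)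
    (hCl : m • 1 ≤ C) (hCu : C ≤ M • 1) (hD : M • 1 ≤ D)
    (Φ : (H →L[ℂ] H) →ₗ[ℂ] (H →L[ℂ] H))
    (hΦpos : ∀ T : H →L[ℂ] H, 0 ≤ T → 0 ≤ Φ T) (hΦ1 : Φ 1 = 1) :
    cfc f (Φ B) + cfc f (Φ C) ≤
        Φ (cfc f A) + Φ (cfc f D) -
          (f m + f M - 2 * f ((m + M) / 2)) •
            ((1 : H →L[ℂ] H) -
              (M - m)⁻¹ •
                (opAbs (Φ B - ((m + M) / 2) • 1) + opAbs (Φ C - ((m + M) / 2) • 1))) ∧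
      Φ (cfc f A) + Φ (cfc f D) -
          (f m + f M - 2 * f ((m + M) / 2)) •
            ((1 : H →L[ℂ] H) -
              (M - m)⁻¹ •
                (opAbs (Φ B - ((m + M) / 2) • 1) + opAbs (Φ C - ((m + M) / 2) • 1))) ≤
        Φ (cfc f A) + Φ (cfc f D) := by
  have hm : m ∈ J := hJmM ⟨le_rfl, hmM.le⟩
  have hM : M ∈ J := hJmM ⟨hmM.le, le_rfl⟩
  have hMm : M - m ≠ 0 := (sub_pos.mpr hmM).ne'
  obtain ⟨a, b, ham, haM⟩ : ∃ a b : ℝ, a * m + b = f m ∧ a * M + b = f M :=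
    ⟨(f M - f m) / (M - m), (M * f m - m * f M) / (M - m), by field_simp; ring,
      by field_simp; ring⟩
  have hΦmono : Monotone Φ := (PositiveLinearMap.mk₀ Φ hΦpos).monotone'
  have hΦ_smul_one (r : ℝ) : Φ (r • 1) = r • 1 := by rw [Φ.map_smul_of_tower, hΦ1]
  have hΦIcc : MapsTo Φ (Icc (m • 1) (M • 1)) (Icc (m • 1) (M • 1)) := by
    have h := hΦmono.mapsTo_Icc (a := m • 1) (b := M • 1)
    rwa [hΦ_smul_one, hΦ_smul_one] at h
  have hΦB := hΦIcc ⟨hBl, hBu⟩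
  have hΦC := hΦIcc ⟨hCl, hCu⟩
  have hδ := sub_nonneg.mpr (hconv.two_mul_map_midpoint_le hm hM)
  refine ⟨?_, sub_le_self _ (smul_nonneg hδ (midpointWeight_nonneg hmM hΦB hΦC))⟩
  calc cfc f (Φ B) + cfc f (Φ C)
      ≤ a • (Φ B + Φ C) + (2 * b) • 1 -
          (f m + f M - 2 * f ((m + M) / 2)) • midpointWeight m M (Φ B) (Φ C) :=
        cfc_add_cfc_le hconv hmM hJmM (hf.mono hJmM) ham haM hΦB hΦC
    _ = Φ (a • A + b • 1) + Φ (a • D + b • 1) -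
          (f m + f M - 2 * f ((m + M) / 2)) • midpointWeight m M (Φ B) (Φ C) := by
        rw [← map_add Φ B C, ← hADBC]
        simp only [map_add, Φ.map_smul_of_tower, hΦ1]
        module
    _ ≤ _ := sub_le_sub_right (add_le_add
        (hΦmono (affine_le_cfc hconv hmM hm hM hf ham haM hAspec (.inl hA)))
        (hΦmono (affine_le_cfc hconv hmM hm hM hf ham haM hDspec (.inr hD)))) _

/-- Corollary 2.4 of the paper. -/
theorem jensen_type_unital_map {H : Type*} [NormedAddCommGroup H] [InnerProductSpace ℂ H]
    [CompleteSpace H] (m M : ℝ) (hmM : m < M) (J : Set ℝ) (hJ : J.OrdConnected)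
    (hJmM : Set.Icc m M ⊆ J) (f : ℝ → ℝ) (hf : ContinuousOn f J) (hconv : ConvexOn ℝ J f)
    (A B C D : H →L[ℂ] H)
    (hAsa : IsSelfAdjoint A) (hAspec : spectrum ℝ A ⊆ J)
    (hBsa : IsSelfAdjoint B) (hBspec : spectrum ℝ B ⊆ J)
    (hCsa : IsSelfAdjoint C) (hCspec : spectrum ℝ C ⊆ J)
    (hDsa : IsSelfAdjoint D) (hDspec : spectrum ℝ D ⊆ J)
    (hADBC : A + D = B + C)
    (hA : A ≤ m • 1) (hBl : m • 1 ≤ B) (hBu : B ≤ M • 1)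
    (hCl : m • 1 ≤ C) (hCu : C ≤ M • 1) (hD : M • 1 ≤ D)
    (Φ : (H →L[ℂ] H) →ₗ[ℂ] (H →L[ℂ] H))
    (hΦpos : ∀ T : H →L[ℂ] H, 0 ≤ T → 0 ≤ Φ T) (hΦ1 : Φ 1 = 1) :
    cfc f (Φ B) + cfc f (Φ C) ≤
        Φ (cfc f A) + Φ (cfc f D) -
          (f m + f M - 2 * f ((m + M) / 2)) •
            ((1 : H →L[ℂ] H) -
              (M - m)⁻¹ •
                (opAbs (Φ B - ((m + M) / 2) • 1) + opAbs (Φ C - ((m + M) / 2) • 1))) ∧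
      Φ (cfc f A) + Φ (cfc f D) -
          (f m + f M - 2 * f ((m + M) / 2)) •
            ((1 : H →L[ℂ] H) -
              (M - m)⁻¹ •
                (opAbs (Φ B - ((m + M) / 2) • 1) + opAbs (Φ C - ((m + M) / 2) • 1))) ≤
        Φ (cfc f A) + Φ (cfc f D) :=
  jensen_type_unital_map_general m M hmM J hJmM f hf hconv A B C D hAspec hDspec hADBC hA hBl hBu
    hCl hCu hD Φ hΦpos hΦ1
end

section
/- Let m < M be real numbers, let J be an interval containing [m, M], and let f : J → ℝ be a continuous convex function. Let A, B, C, D ∈ σ(J) satisfy A + D = B + C, A ≤ m·I, m·I ≤ B ≤ M·I, m·I ≤ C ≤ M·I and M·I ≤ D. Then f(B) + f(C) ≤ f(A) + f(D) − δ_f · X̃ ≤ f(A) + f(D), where X̃ = I − (1/(M−m))·( |B − ((m+M)/2)·I| + |C − ((m+M)/2)·I| ). -/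
open Set

namespace ConvexOn

variable {s : Set ℝ} {f : ℝ → ℝ} {a b t : ℝ}

theorem le_chord (hf : ConvexOn ℝ s f) (ha : a ∈ s) (hb : b ∈ s) (ht : t ∈ Icc a b) :
    f t ≤ f a + slope f a b * (t - a) := by
  rcases eq_or_ne t a with rfl | hta
  · simp
  have hba : b ≠ a := ((lt_of_le_of_ne ht.1 hta.symm).trans_le ht.2).ne'
  have hsec := hf.secant_mono ha (hf.1.ordConnected.out ha hb ht) hb hta hba ht.2
  rw [slope_def_field]
  calc f t = f a + (f t - f a) / (t - a) * (t - a) := by field_simp; ring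
    _ ≤ f a + (f b - f a) / (b - a) * (t - a) := by
      gcongr
      exact sub_nonneg.2 ht.1

theorem chord_le_of_le_or_le (hf : ConvexOn ℝ s f) (ha : a ∈ s) (hb : b ∈ s) (hab : a < b)
    (ht : t ∈ s) (hout : t ≤ a ∨ b ≤ t) : f a + slope f a b * (t - a) ≤ f t := by
  rcases eq_or_ne t a with rfl | hta
  · simp
  have hft : f t = f a + (f t - f a) / (t - a) * (t - a) := by field_simp; ring
  rw [slope_def_field, hft]
  rcases hout with hta' | hbt
  · have hsec := hf.secant_mono ha ht hb hta hab.ne' (hta'.trans hab.le)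
    gcongr f a + ?_
    exact mul_le_mul_of_nonpos_right hsec (sub_nonpos.2 hta')
  · have hsec := hf.secant_mono ha hb ht hab.ne' hta hbt
    gcongr
    linarith

theorem map_midpoint_le (hf : ConvexOn ℝ s f) (ha : a ∈ s) (hb : b ∈ s) :
    2 * f ((a + b) / 2) ≤ f a + f b := by
  have h := hf.2 ha hb (by norm_num : (0 : ℝ) ≤ 2⁻¹) (by norm_num : (0 : ℝ) ≤ 2⁻¹) (by norm_num)
  rw [smul_eq_mul, smul_eq_mul, smul_eq_mul, smul_eq_mul] at h
  rw [show (a + b) / 2 = 2⁻¹ * a + 2⁻¹ * b by ring]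
  linarith

end ConvexOn

/-- The operator `X̃` of the paper is `tent m M (B) + tent m M (C)`. -/
noncomputable def tent (m M t : ℝ) : ℝ := 2⁻¹ - (M - m)⁻¹ * |t - (m + M) / 2|

theorem continuous_tent (m M : ℝ) : Continuous (tent m M) := by
  unfold tent
  fun_prop

theorem tent_nonneg {m M t : ℝ} (ht : t ∈ Icc m M) : 0 ≤ tent m M t := by
  have habs : |t - (m + M) / 2| ≤ (M - m) / 2 := abs_le.2 ⟨by linarith [ht.1], by linarith [ht.2]⟩
  rcases (ht.1.trans ht.2).eq_or_lt with rfl | hmM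
  · simp [tent]
  rw [tent, sub_nonneg, inv_mul_le_iff₀ (sub_pos.2 hmM)]
  linarith

theorem ConvexOn.le_chord_sub_mul_tent {s : Set ℝ} {f : ℝ → ℝ} {m M t : ℝ}
    (hf : ConvexOn ℝ s f) (hs : Icc m M ⊆ s) (hmM : m < M) (ht : t ∈ Icc m M) :
    f t ≤ f m + slope f m M * (t - m) - (f m + f M - 2 * f ((m + M) / 2)) * tent m M t := by
  have hm : m ∈ s := hs (left_mem_Icc.2 hmM.le)
  have hM : M ∈ s := hs (right_mem_Icc.2 hmM.le)
  have hc : (m + M) / 2 ∈ s := hs ⟨by linarith, by linarith⟩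
  have hMm : M - m ≠ 0 := sub_ne_zero.2 hmM.ne'
  rcases le_total t ((m + M) / 2) with htc | hct
  · calc f t ≤ f m + slope f m ((m + M) / 2) * (t - m) := hf.le_chord hm hc ⟨ht.1, htc⟩
      _ = _ := by
        rw [tent, slope_def_field, slope_def_field, abs_of_nonpos (sub_nonpos.2 htc),
          show (m + M) / 2 - m = (M - m) / 2 by ring]
        field_simp
        ring
  · calc f t ≤ f ((m + M) / 2) + slope f ((m + M) / 2) M * (t - (m + M) / 2) :=
          hf.le_chord hc hM ⟨hct, ht.2⟩
      _ = _ := by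
        rw [tent, slope_def_field, slope_def_field, abs_of_nonneg (sub_nonneg.2 hct),
          show M - (m + M) / 2 = (M - m) / 2 by ring]
        field_simp
        ring

section CStarAlgebra

variable {𝒜 : Type*} [CStarAlgebra 𝒜]

theorem cfc_tent (m M : ℝ) {a : 𝒜} (ha : IsSelfAdjoint a) :
    cfc (tent m M) a =
      (2⁻¹ : ℝ) • 1 - (M - m)⁻¹ • cfc (fun t : ℝ => |t|) (a - ((m + M) / 2) • 1) := by
  have hshift : cfc (fun t : ℝ => t - (m + M) / 2) a = a - ((m + M) / 2) • 1 := by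
    rw [cfc_sub .., cfc_id' .., cfc_const .., Algebra.algebraMap_eq_smul_one]
  unfold tent
  rw [← hshift, ← cfc_comp' (fun t : ℝ => |t|) (fun t : ℝ => t - (m + M) / 2) a,
    cfc_sub .., cfc_const .., cfc_const_mul .., Algebra.algebraMap_eq_smul_one]

variable [PartialOrder 𝒜] [StarOrderedRing 𝒜]

theorem spectrum_subset_Icc_of_le {a : 𝒜} {m M : ℝ} (ha : IsSelfAdjoint a) (hm : m • 1 ≤ a)
    (hM : a ≤ M • 1) : spectrum ℝ a ⊆ Icc m M := by
  rw [← Algebra.algebraMap_eq_smul_one] at hm hM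
  exact fun t ht => ⟨(algebraMap_le_iff_le_spectrum ha).1 hm t ht,
    (le_algebraMap_iff_spectrum_le ha).1 hM t ht⟩

theorem cfc_add_cfc_le_of_affine_bounds {f g : ℝ → ℝ} {α β δ : ℝ} {a b c d : 𝒜}
    (habcd : a + d = b + c)
    (hℓa : ∀ t ∈ spectrum ℝ a, α + β * t ≤ f t) (hℓd : ∀ t ∈ spectrum ℝ d, α + β * t ≤ f t)
    (hℓb : ∀ t ∈ spectrum ℝ b, f t ≤ α + β * t - δ * g t)
    (hℓc : ∀ t ∈ spectrum ℝ c, f t ≤ α + β * t - δ * g t)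
    (hfa : ContinuousOn f (spectrum ℝ a)) (hfb : ContinuousOn f (spectrum ℝ b))
    (hfc : ContinuousOn f (spectrum ℝ c)) (hfd : ContinuousOn f (spectrum ℝ d))
    (hgb : ContinuousOn g (spectrum ℝ b)) (hgc : ContinuousOn g (spectrum ℝ c))
    (ha : IsSelfAdjoint a) (hb : IsSelfAdjoint b) (hc : IsSelfAdjoint c) (hd : IsSelfAdjoint d) :
    cfc f b + cfc f c ≤ cfc f a + cfc f d - δ • (cfc g b + cfc g c) := by
  have cfc_affine (x : 𝒜) (hx : IsSelfAdjoint x) :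
      cfc (fun t => α + β * t) x = algebraMap ℝ 𝒜 α + β • x := by
    rw [cfc_const_add .., cfc_const_mul_id ..]
  have hb' : cfc f b ≤ algebraMap ℝ 𝒜 α + β • b - δ • cfc g b := by
    rw [← cfc_affine b hb, ← cfc_const_mul .., ← cfc_sub ..]
    exact cfc_mono hℓb
  have hc' : cfc f c ≤ algebraMap ℝ 𝒜 α + β • c - δ • cfc g c := by
    rw [← cfc_affine c hc, ← cfc_const_mul .., ← cfc_sub ..]
    exact cfc_mono hℓc
  have ha' : algebraMap ℝ 𝒜 α + β • a ≤ cfc f a := cfc_affine a ha ▸ cfc_mono hℓa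
  have hd' : algebraMap ℝ 𝒜 α + β • d ≤ cfc f d := cfc_affine d hd ▸ cfc_mono hℓd
  calc cfc f b + cfc f c
      ≤ (algebraMap ℝ 𝒜 α + β • b - δ • cfc g b) + (algebraMap ℝ 𝒜 α + β • c - δ • cfc g c) :=
        add_le_add hb' hc'
    _ = (algebraMap ℝ 𝒜 α + β • a) + (algebraMap ℝ 𝒜 α + β • d) - δ • (cfc g b + cfc g c) := by
        linear_combination (norm := module) (-β) • habcd
    _ ≤ cfc f a + cfc f d - δ • (cfc g b + cfc g c) := by gcongr

end CStarAlgebra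

theorem jensen_type_four_operators_general {H : Type*} [NormedAddCommGroup H] [InnerProductSpace ℂ H]
    [CompleteSpace H] (m M : ℝ) (hmM : m < M) (J : Set ℝ)
    (hJmM : Set.Icc m M ⊆ J) (f : ℝ → ℝ) (hf : ContinuousOn f J) (hconv : ConvexOn ℝ J f)
    (A B C D : H →L[ℂ] H)
    (hAsa : IsSelfAdjoint A) (hAspec : spectrum ℝ A ⊆ J)
    (hBsa : IsSelfAdjoint B)
    (hCsa : IsSelfAdjoint C)
    (hDsa : IsSelfAdjoint D) (hDspec : spectrum ℝ D ⊆ J)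
    (hADBC : A + D = B + C)
    (hA : A ≤ m • 1) (hBl : m • 1 ≤ B) (hBu : B ≤ M • 1)
    (hCl : m • 1 ≤ C) (hCu : C ≤ M • 1) (hD : M • 1 ≤ D) :
    cfc f B + cfc f C ≤
        cfc f A + cfc f D -
          (f m + f M - 2 * f ((m + M) / 2)) •
            ((1 : H →L[ℂ] H) -
              (M - m)⁻¹ •
                (opAbs (B - ((m + M) / 2) • 1) + opAbs (C - ((m + M) / 2) • 1))) ∧
      cfc f A + cfc f D -
          (f m + f M - 2 * f ((m + M) / 2)) •
            ((1 : H →L[ℂ] H) -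
              (M - m)⁻¹ •
                (opAbs (B - ((m + M) / 2) • 1) + opAbs (C - ((m + M) / 2) • 1))) ≤
        cfc f A + cfc f D := by
  have hmJ : m ∈ J := hJmM (left_mem_Icc.2 hmM.le)
  have hMJ : M ∈ J := hJmM (right_mem_Icc.2 hmM.le)
  have hBspec := spectrum_subset_Icc_of_le hBsa hBl hBu
  have hCspec := spectrum_subset_Icc_of_le hCsa hCl hCu
  rw [← Algebra.algebraMap_eq_smul_one] at hA hD
  have hX : (1 : H →L[ℂ] H) - (M - m)⁻¹ •
      (opAbs (B - ((m + M) / 2) • 1) + opAbs (C - ((m + M) / 2) • 1)) =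
      cfc (tent m M) B + cfc (tent m M) C := by
    rw [cfc_tent m M hBsa, cfc_tent m M hCsa, opAbs, opAbs]
    module
  have chord_le {X : H →L[ℂ] H} (hXJ : spectrum ℝ X ⊆ J)
      (hXout : ∀ t ∈ spectrum ℝ X, t ≤ m ∨ M ≤ t) (t) (ht : t ∈ spectrum ℝ X) :
      f m - slope f m M * m + slope f m M * t ≤ f t := by
    linarith [hconv.chord_le_of_le_or_le hmJ hMJ hmM (hXJ ht) (hXout t ht)]
  have le_chord {X : H →L[ℂ] H} (hX : spectrum ℝ X ⊆ Icc m M) (t) (ht : t ∈ spectrum ℝ X) :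
      f t ≤ f m - slope f m M * m + slope f m M * t -
        (f m + f M - 2 * f ((m + M) / 2)) * tent m M t := by
    linarith [hconv.le_chord_sub_mul_tent hJmM hmM (hX ht)]
  rw [hX]
  refine ⟨cfc_add_cfc_le_of_affine_bounds hADBC
    (chord_le hAspec fun t ht => .inl ((le_algebraMap_iff_spectrum_le hAsa).1 hA t ht))
    (chord_le hDspec fun t ht => .inr ((algebraMap_le_iff_le_spectrum hDsa).1 hD t ht))
    (le_chord hBspec) (le_chord hCspec) (hf.mono hAspec) (hf.mono (hBspec.trans hJmM))
    (hf.mono (hCspec.trans hJmM)) (hf.mono hDspec) (continuous_tent m M).continuousOn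
    (continuous_tent m M).continuousOn hAsa hBsa hCsa hDsa, sub_le_self _ (smul_nonneg ?_ ?_)⟩
  · linarith [hconv.map_midpoint_le hmJ hMJ]
  · exact add_nonneg (cfc_nonneg fun t ht => tent_nonneg (hBspec ht))
      (cfc_nonneg fun t ht => tent_nonneg (hCspec ht))

/-- inequality (2.6) of the paper. -/
theorem jensen_type_four_operators {H : Type*} [NormedAddCommGroup H] [InnerProductSpace ℂ H]
    [CompleteSpace H] (m M : ℝ) (hmM : m < M) (J : Set ℝ) (hJ : J.OrdConnected)
    (hJmM : Set.Icc m M ⊆ J) (f : ℝ → ℝ) (hf : ContinuousOn f J) (hconv : ConvexOn ℝ J f)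
    (A B C D : H →L[ℂ] H)
    (hAsa : IsSelfAdjoint A) (hAspec : spectrum ℝ A ⊆ J)
    (hBsa : IsSelfAdjoint B) (hBspec : spectrum ℝ B ⊆ J)
    (hCsa : IsSelfAdjoint C) (hCspec : spectrum ℝ C ⊆ J)
    (hDsa : IsSelfAdjoint D) (hDspec : spectrum ℝ D ⊆ J)
    (hADBC : A + D = B + C)
    (hA : A ≤ m • 1) (hBl : m • 1 ≤ B) (hBu : B ≤ M • 1)
    (hCl : m • 1 ≤ C) (hCu : C ≤ M • 1) (hD : M • 1 ≤ D) :
    cfc f B + cfc f C ≤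
        cfc f A + cfc f D -
          (f m + f M - 2 * f ((m + M) / 2)) •
            ((1 : H →L[ℂ] H) -
              (M - m)⁻¹ •
                (opAbs (B - ((m + M) / 2) • 1) + opAbs (C - ((m + M) / 2) • 1))) ∧
      cfc f A + cfc f D -
          (f m + f M - 2 * f ((m + M) / 2)) •
            ((1 : H →L[ℂ] H) -
              (M - m)⁻¹ •
                (opAbs (B - ((m + M) / 2) • 1) + opAbs (C - ((m + M) / 2) • 1))) ≤
        cfc f A + cfc f D :=
  jensen_type_four_operators_general m M hmM J hJmM f hf hconv A B C D hAsa hAspec hBsa hCsa hDsa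
    hDspec hADBC hA hBl hBu hCl hCu hD
end

section
/- Let m < M be real numbers, let J be an interval containing [m, M], and let f : J → ℝ be a continuous convex function. Let A_i, B_i, C_i, D_i ∈ σ(J) (i = 1,…,n) satisfy A_i + D_i = B_i + C_i, A_i ≤ m·I, m·I ≤ B_i ≤ M·I, m·I ≤ C_i ≤ M·I and M·I ≤ D_i for each i, and let Φ_1,…,Φ_n be positive linear maps on B(H) with Σ_{i=1}^n Φ_i(I) = I. Then f(Σ_i Φ_i(B_i)) + f(Σ_i Φ_i(C_i)) ≤ Σ_i Φ_i(f(A_i)) + Σ_i Φ_i(f(D_i)) − δ_f · X̃₁ ≤ Σ_i Φ_i(f(A_i)) + Σ_i Φ_i(f(D_i)), where X̃₁ = I − (1/(M−m))·[ |Σ_i Φ_i(B_i) − ((m+M)/2)·I| + |Σ_i Φ_i(C_i) − ((m+M)/2)·I| ]. -/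
open Set

namespace ConvexOn

variable {s : Set ℝ} {f : ℝ → ℝ}

theorem sub_mul_le_of_mem_Icc_s6 (hf : ConvexOn ℝ s f) {x y z : ℝ} (hx : x ∈ s) (hz : z ∈ s)
    (hy : y ∈ Icc x z) : (z - x) * f y ≤ (z - y) * f x + (y - x) * f z := by
  obtain ⟨hxy, hyz⟩ := hy
  rcases hxy.eq_or_lt with rfl | hxy
  · linarith
  rcases hyz.eq_or_lt with rfl | hyz
  · linarith
  exact hf.secant_mono_aux1 hx hz hxy hyz

variable {m M : ℝ}

theorem chord_le_of_notMem_Ioo (hf : ConvexOn ℝ s f) (hmM : m < M) (hm : m ∈ s) (hM : M ∈ s)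
    {t : ℝ} (ht : t ∈ s) (hout : t ∉ Ioo m M) :
    (M * f m - m * f M) / (M - m) + (f M - f m) / (M - m) * t ≤ f t := by
  rw [show (M * f m - m * f M) / (M - m) + (f M - f m) / (M - m) * t =
      (M * f m - m * f M + (f M - f m) * t) / (M - m) by ring, div_le_iff₀ (sub_pos.2 hmM)]
  rcases le_or_gt t m with htm | hmt
  · linarith [hf.sub_mul_le_of_mem_Icc_s6 ht hM ⟨htm, hmM.le⟩]
  · have hMt : M ≤ t := le_of_not_gt fun htM => hout ⟨hmt, htM⟩
    linarith [hf.sub_mul_le_of_mem_Icc_s6 hm ht ⟨hmM.le, hMt⟩]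

theorem le_chord_sub_midpoint_defect (hf : ConvexOn ℝ s f) (hmM : m < M) (hs : Icc m M ⊆ s)
    {t : ℝ} (ht : t ∈ Icc m M) :
    f t ≤ (M * f m - m * f M) / (M - m) + (f M - f m) / (M - m) * t -
      (f m + f M - 2 * f ((m + M) / 2)) * (1 / 2 - |t - (m + M) / 2| / (M - m)) := by
  have hMm : 0 < M - m := sub_pos.2 hmM
  have hm : m ∈ s := hs ⟨le_rfl, hmM.le⟩
  have hM : M ∈ s := hs ⟨hmM.le, le_rfl⟩
  have hc : (m + M) / 2 ∈ s := hs ⟨by linarith, by linarith⟩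
  obtain ⟨htm, htM⟩ := ht
  refine le_of_mul_le_mul_left ?_ hMm
  rw [show (M - m) * ((M * f m - m * f M) / (M - m) + (f M - f m) / (M - m) * t -
      (f m + f M - 2 * f ((m + M) / 2)) * (1 / 2 - |t - (m + M) / 2| / (M - m))) =
      M * f m - m * f M + (f M - f m) * t -
      (f m + f M - 2 * f ((m + M) / 2)) * ((M - m) / 2 - |t - (m + M) / 2|) by
    field_simp]
  rcases le_total t ((m + M) / 2) with htc | htc
  · rw [abs_of_nonpos (sub_nonpos.2 htc)]
    linarith [hf.sub_mul_le_of_mem_Icc_s6 hm hc ⟨htm, htc⟩]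
  · rw [abs_of_nonneg (sub_nonneg.2 htc)]
    linarith [hf.sub_mul_le_of_mem_Icc_s6 hc hM ⟨htc, htM⟩]

theorem midpoint_defect_nonneg (hf : ConvexOn ℝ s f) (hm : m ∈ s) (hM : M ∈ s) :
    0 ≤ f m + f M - 2 * f ((m + M) / 2) := by
  have := hf.2 hm hM (by norm_num : (0 : ℝ) ≤ 1 / 2) (by norm_num : (0 : ℝ) ≤ 1 / 2)
    (by norm_num)
  simp only [smul_eq_mul] at this
  rw [show 1 / 2 * m + 1 / 2 * M = (m + M) / 2 by ring] at this
  linarith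

end ConvexOn

section PositiveMaps

variable {ι 𝕜 E F : Type*} [Fintype ι] [Semiring 𝕜]
  [AddCommGroup E] [PartialOrder E] [IsOrderedAddMonoid E] [Module 𝕜 E]
  [AddCommGroup F] [PartialOrder F] [IsOrderedAddMonoid F] [Module 𝕜 F]
  {Φ : ι → E →ₗ[𝕜] F}

theorem monotone_sum_map (hΦ : ∀ i x, 0 ≤ x → 0 ≤ Φ i x) :
    Monotone fun x : ι → E => ∑ i, Φ i (x i) := by
  intro x y hxy
  rw [← sub_nonneg, ← Finset.sum_sub_distrib]
  exact Finset.sum_nonneg fun i _ => by simpa using hΦ i _ (sub_nonneg.2 (hxy i))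

end PositiveMaps

section UnitalFamily

variable {ι A : Type*} [Fintype ι] [CStarAlgebra A] {Φ : ι → A →ₗ[ℂ] A}

theorem sum_map_affine (hΦ1 : ∑ i, Φ i 1 = 1) (α β : ℝ) (x : ι → A) :
    ∑ i, Φ i (α • 1 + β • x i) = α • 1 + β • ∑ i, Φ i (x i) := by
  simp only [map_add, LinearMap.map_smul_of_tower, Finset.sum_add_distrib, ← Finset.smul_sum,
    hΦ1]

variable [PartialOrder A] [StarOrderedRing A]

theorem smul_one_le_sum_map (hΦ : ∀ i x, 0 ≤ x → 0 ≤ Φ i x) (hΦ1 : ∑ i, Φ i 1 = 1) {r : ℝ}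
    {x : ι → A} (hx : ∀ i, r • 1 ≤ x i) : r • 1 ≤ ∑ i, Φ i (x i) := by
  simpa [← Finset.smul_sum, hΦ1] using
    monotone_sum_map hΦ (show (fun _ => (r • 1 : A)) ≤ x from hx)

theorem sum_map_le_smul_one (hΦ : ∀ i x, 0 ≤ x → 0 ≤ Φ i x) (hΦ1 : ∑ i, Φ i 1 = 1) {r : ℝ}
    {x : ι → A} (hx : ∀ i, x i ≤ r • 1) : ∑ i, Φ i (x i) ≤ r • 1 := by
  simpa [← Finset.smul_sum, hΦ1] using
    monotone_sum_map hΦ (show x ≤ fun _ => (r • 1 : A) from hx)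

end UnitalFamily

section FunctionalCalculus

variable {A : Type*} [CStarAlgebra A] {a : A}

theorem cfc_affine_s6 (ha : IsSelfAdjoint a) (α β : ℝ) :
    cfc (fun t : ℝ => α + β * t) a = α • 1 + β • a := by
  rw [cfc_const_add α (fun t => β * t) a, cfc_const_mul_id β a, Algebra.algebraMap_eq_smul_one]

theorem cfc_affine_add_abs (ha : IsSelfAdjoint a) (α β γ c : ℝ) :
    cfc (fun t : ℝ => α + β * t + γ * |t - c|) a =
      α • 1 + β • a + γ • cfc (fun t : ℝ => |t - c|) a := by
  rw [cfc_add a (fun t => α + β * t) (fun t => γ * |t - c|), cfc_affine_s6 ha,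
    cfc_const_mul γ (fun t => |t - c|) a]

variable [PartialOrder A] [StarOrderedRing A]

theorem IsSelfAdjoint.of_smul_one_le {r : ℝ} (h : r • 1 ≤ a) : IsSelfAdjoint a :=
  .of_ge h ((IsSelfAdjoint.all r).smul (.one A))

theorem spectrum_subset_Icc_of_smul_one_le {m M : ℝ} (hm : m • 1 ≤ a) (hM : a ≤ M • 1) :
    spectrum ℝ a ⊆ Icc m M := by
  have ha := IsSelfAdjoint.of_smul_one_le hm
  rw [← Algebra.algebraMap_eq_smul_one] at hm hM
  exact fun t ht => ⟨(algebraMap_le_iff_le_spectrum ha).1 hm t ht,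
    (le_algebraMap_iff_spectrum_le ha).1 hM t ht⟩

theorem affine_le_cfc_s6 {f : ℝ → ℝ} (ha : IsSelfAdjoint a) (hf : ContinuousOn f (spectrum ℝ a))
    {α β : ℝ} (h : ∀ t ∈ spectrum ℝ a, α + β * t ≤ f t) : α • 1 + β • a ≤ cfc f a :=
  cfc_affine_s6 ha α β ▸ cfc_mono h

theorem cfc_le_affine_add_abs {f : ℝ → ℝ} (ha : IsSelfAdjoint a)
    (hf : ContinuousOn f (spectrum ℝ a)) {α β γ c : ℝ}
    (h : ∀ t ∈ spectrum ℝ a, f t ≤ α + β * t + γ * |t - c|) :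
    cfc f a ≤ α • 1 + β • a + γ • cfc (fun t : ℝ => |t - c|) a :=
  cfc_affine_add_abs ha α β γ c ▸ cfc_mono h

theorem cfc_abs_sub_midpoint_le_s6 {m M : ℝ} (hm : m • 1 ≤ a) (hM : a ≤ M • 1) :
    cfc (fun t : ℝ => |t - (m + M) / 2|) a ≤ ((M - m) / 2) • 1 := by
  have hspec := spectrum_subset_Icc_of_smul_one_le hm hM
  rw [← Algebra.algebraMap_eq_smul_one]
  refine cfc_le_algebraMap _ _ a (fun t ht => ?_) (ha := IsSelfAdjoint.of_smul_one_le hm)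
  obtain ⟨h1, h2⟩ := hspec ht
  rw [abs_le]
  constructor <;> linarith

theorem one_sub_inv_smul_add_nonneg {r : ℝ} (hr : 0 < r) {x y : A} (hx : x ≤ (r / 2) • 1)
    (hy : y ≤ (r / 2) • 1) : 0 ≤ 1 - r⁻¹ • (x + y) := by
  rw [sub_nonneg]
  calc r⁻¹ • (x + y) ≤ r⁻¹ • ((r / 2) • 1 + (r / 2) • 1 : A) :=
        smul_le_smul_of_nonneg_left (add_le_add hx hy) (inv_nonneg.2 hr.le)
    _ = 1 := by rw [← add_smul, add_halves, smul_smul, inv_mul_cancel₀ hr.ne', one_smul]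

theorem notMem_Ioo_of_mem_spectrum (ha : IsSelfAdjoint a) {m M t : ℝ}
    (hout : a ≤ m • 1 ∨ M • 1 ≤ a) (ht : t ∈ spectrum ℝ a) : t ∉ Ioo m M := by
  rintro ⟨hmt, htM⟩
  rw [← Algebra.algebraMap_eq_smul_one, ← Algebra.algebraMap_eq_smul_one] at hout
  rcases hout with h | h
  · exact hmt.not_ge ((le_algebraMap_iff_spectrum_le ha).1 h t ht)
  · exact htM.not_ge ((algebraMap_le_iff_le_spectrum ha).1 h t ht)

end FunctionalCalculus

namespace ConvexOn

variable {J : Set ℝ} {f : ℝ → ℝ} {m M : ℝ}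
  {ι A : Type*} [Fintype ι] [CStarAlgebra A] [PartialOrder A] [StarOrderedRing A]

theorem chord_le_sum_map_cfc (hconv : ConvexOn ℝ J f) (hf : ContinuousOn f J) (hmM : m < M)
    (hm : m ∈ J) (hM : M ∈ J) {Φ : ι → A →ₗ[ℂ] A} (hΦ : ∀ i x, 0 ≤ x → 0 ≤ Φ i x)
    (hΦ1 : ∑ i, Φ i 1 = 1) {x : ι → A} (hsa : ∀ i, IsSelfAdjoint (x i))
    (hspec : ∀ i, spectrum ℝ (x i) ⊆ J) (hout : ∀ i, x i ≤ m • 1 ∨ M • 1 ≤ x i) :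
    ((M * f m - m * f M) / (M - m)) • 1 + ((f M - f m) / (M - m)) • ∑ i, Φ i (x i) ≤
      ∑ i, Φ i (cfc f (x i)) := by
  rw [← sum_map_affine hΦ1]
  refine monotone_sum_map hΦ fun i => affine_le_cfc_s6 (hsa i) (hf.mono (hspec i)) fun t ht => ?_
  exact hconv.chord_le_of_notMem_Ioo hmM hm hM (hspec i ht)
    (notMem_Ioo_of_mem_spectrum (hsa i) (hout i) ht)

theorem cfc_le_chord_sub_midpoint_defect (hconv : ConvexOn ℝ J f) (hf : ContinuousOn f J)
    (hmM : m < M) (hJ : Icc m M ⊆ J) {a : A} (hma : m • 1 ≤ a) (haM : a ≤ M • 1) :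
    cfc f a ≤ ((M * f m - m * f M) / (M - m)) • 1 + ((f M - f m) / (M - m)) • a -
      (f m + f M - 2 * f ((m + M) / 2)) •
        ((1 / 2 : ℝ) • 1 - (M - m)⁻¹ • cfc (fun t : ℝ => |t - (m + M) / 2|) a) := by
  have hspec := spectrum_subset_Icc_of_smul_one_le hma haM
  refine (cfc_le_affine_add_abs (IsSelfAdjoint.of_smul_one_le hma) (hf.mono (hspec.trans hJ))
    (α := (M * f m - m * f M) / (M - m) - (f m + f M - 2 * f ((m + M) / 2)) / 2)
    (β := (f M - f m) / (M - m)) (γ := (f m + f M - 2 * f ((m + M) / 2)) * (M - m)⁻¹)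
    fun t ht => ?_).trans_eq (by module)
  convert hconv.le_chord_sub_midpoint_defect hmM hJ (hspec ht) using 1
  ring

end ConvexOn

theorem opAbs_sub_smul_one {H : Type*} [NormedAddCommGroup H] [InnerProductSpace ℂ H]
    [CompleteSpace H] {T : H →L[ℂ] H} (hT : IsSelfAdjoint T) (c : ℝ) :
    opAbs (T - c • 1) = cfc (fun t : ℝ => |t - c|) T := by
  have hshift : T - c • 1 = cfc (fun t : ℝ => t - c) T := by
    rw [cfc_sub (fun t : ℝ => t) (fun _ => c) T, cfc_id' ℝ T, cfc_const c T,
      Algebra.algebraMap_eq_smul_one]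
  rw [opAbs, hshift, ← cfc_comp' (fun t : ℝ => |t|) (fun t => t - c) T]

theorem jensen_type_maps_one_general {H : Type*} [NormedAddCommGroup H] [InnerProductSpace ℂ H]
    [CompleteSpace H] {n : ℕ} (m M : ℝ) (hmM : m < M) (J : Set ℝ)
    (hJmM : Set.Icc m M ⊆ J) (f : ℝ → ℝ) (hf : ContinuousOn f J) (hconv : ConvexOn ℝ J f)
    (A B C D : Fin n → H →L[ℂ] H)
    (hAsa : ∀ i, IsSelfAdjoint (A i)) (hAspec : ∀ i, spectrum ℝ (A i) ⊆ J)
    (hDsa : ∀ i, IsSelfAdjoint (D i)) (hDspec : ∀ i, spectrum ℝ (D i) ⊆ J)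
    (hADBC : ∀ i, A i + D i = B i + C i)
    (hA : ∀ i, A i ≤ m • 1) (hBl : ∀ i, m • 1 ≤ B i) (hBu : ∀ i, B i ≤ M • 1)
    (hCl : ∀ i, m • 1 ≤ C i) (hCu : ∀ i, C i ≤ M • 1) (hD : ∀ i, M • 1 ≤ D i)
    (Φ : Fin n → (H →L[ℂ] H) →ₗ[ℂ] (H →L[ℂ] H))
    (hΦpos : ∀ i, ∀ T : H →L[ℂ] H, 0 ≤ T → 0 ≤ Φ i T)
    (hΦ1 : ∑ i, Φ i 1 = (1 : H →L[ℂ] H)) :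
    cfc f (∑ i, Φ i (B i)) + cfc f (∑ i, Φ i (C i)) ≤
        ∑ i, Φ i (cfc f (A i)) + ∑ i, Φ i (cfc f (D i)) -
          (f m + f M - 2 * f ((m + M) / 2)) •
            ((1 : H →L[ℂ] H) -
              (M - m)⁻¹ •
                (opAbs (∑ i, Φ i (B i) - ((m + M) / 2) • 1) +
                  opAbs (∑ i, Φ i (C i) - ((m + M) / 2) • 1))) ∧
      ∑ i, Φ i (cfc f (A i)) + ∑ i, Φ i (cfc f (D i)) -
          (f m + f M - 2 * f ((m + M) / 2)) •
            ((1 : H →L[ℂ] H) -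
              (M - m)⁻¹ •
                (opAbs (∑ i, Φ i (B i) - ((m + M) / 2) • 1) +
                  opAbs (∑ i, Φ i (C i) - ((m + M) / 2) • 1))) ≤
        ∑ i, Φ i (cfc f (A i)) + ∑ i, Φ i (cfc f (D i)) := by
  have hm : m ∈ J := hJmM ⟨le_rfl, hmM.le⟩
  have hM : M ∈ J := hJmM ⟨hmM.le, le_rfl⟩
  have hmB := smul_one_le_sum_map hΦpos hΦ1 hBl
  have hBM := sum_map_le_smul_one hΦpos hΦ1 hBu
  have hmC := smul_one_le_sum_map hΦpos hΦ1 hCl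
  have hCM := sum_map_le_smul_one hΦpos hΦ1 hCu
  rw [opAbs_sub_smul_one (.of_smul_one_le hmB), opAbs_sub_smul_one (.of_smul_one_le hmC)]
  have hcorr := one_sub_inv_smul_add_nonneg (sub_pos.2 hmM)
    (cfc_abs_sub_midpoint_le_s6 hmB hBM) (cfc_abs_sub_midpoint_le_s6 hmC hCM)
  refine ⟨?_, sub_le_self _ (smul_nonneg (hconv.midpoint_defect_nonneg hm hM) hcorr)⟩
  have hsum : ∑ i, Φ i (A i) + ∑ i, Φ i (D i) = ∑ i, Φ i (B i) + ∑ i, Φ i (C i) := by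
    simp only [← Finset.sum_add_distrib, ← map_add, hADBC]
  calc _ ≤ _ := add_le_add (hconv.cfc_le_chord_sub_midpoint_defect hf hmM hJmM hmB hBM)
        (hconv.cfc_le_chord_sub_midpoint_defect hf hmM hJmM hmC hCM)
    _ = _ := by linear_combination (norm := module) (-((f M - f m) / (M - m))) • hsum
    _ ≤ _ := sub_le_sub_right (add_le_add
        (hconv.chord_le_sum_map_cfc hf hmM hm hM hΦpos hΦ1 hAsa hAspec fun i => .inl (hA i))
        (hconv.chord_le_sum_map_cfc hf hmM hm hM hΦpos hΦ1 hDsa hDspec fun i => .inr (hD i))) _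

/-- **Corollary 2.5 (1) of the paper.** -/
theorem jensen_type_maps_one {H : Type*} [NormedAddCommGroup H] [InnerProductSpace ℂ H]
    [CompleteSpace H] {n : ℕ} (m M : ℝ) (hmM : m < M) (J : Set ℝ) (hJ : J.OrdConnected)
    (hJmM : Set.Icc m M ⊆ J) (f : ℝ → ℝ) (hf : ContinuousOn f J) (hconv : ConvexOn ℝ J f)
    (A B C D : Fin n → H →L[ℂ] H)
    (hAsa : ∀ i, IsSelfAdjoint (A i)) (hAspec : ∀ i, spectrum ℝ (A i) ⊆ J)
    (hBsa : ∀ i, IsSelfAdjoint (B i)) (hBspec : ∀ i, spectrum ℝ (B i) ⊆ J)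
    (hCsa : ∀ i, IsSelfAdjoint (C i)) (hCspec : ∀ i, spectrum ℝ (C i) ⊆ J)
    (hDsa : ∀ i, IsSelfAdjoint (D i)) (hDspec : ∀ i, spectrum ℝ (D i) ⊆ J)
    (hADBC : ∀ i, A i + D i = B i + C i)
    (hA : ∀ i, A i ≤ m • 1) (hBl : ∀ i, m • 1 ≤ B i) (hBu : ∀ i, B i ≤ M • 1)
    (hCl : ∀ i, m • 1 ≤ C i) (hCu : ∀ i, C i ≤ M • 1) (hD : ∀ i, M • 1 ≤ D i)
    (Φ : Fin n → (H →L[ℂ] H) →ₗ[ℂ] (H →L[ℂ] H))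
    (hΦpos : ∀ i, ∀ T : H →L[ℂ] H, 0 ≤ T → 0 ≤ Φ i T)
    (hΦ1 : ∑ i, Φ i 1 = (1 : H →L[ℂ] H)) :
    cfc f (∑ i, Φ i (B i)) + cfc f (∑ i, Φ i (C i)) ≤
        ∑ i, Φ i (cfc f (A i)) + ∑ i, Φ i (cfc f (D i)) -
          (f m + f M - 2 * f ((m + M) / 2)) •
            ((1 : H →L[ℂ] H) -
              (M - m)⁻¹ •
                (opAbs (∑ i, Φ i (B i) - ((m + M) / 2) • 1) +
                  opAbs (∑ i, Φ i (C i) - ((m + M) / 2) • 1))) ∧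
      ∑ i, Φ i (cfc f (A i)) + ∑ i, Φ i (cfc f (D i)) -
          (f m + f M - 2 * f ((m + M) / 2)) •
            ((1 : H →L[ℂ] H) -
              (M - m)⁻¹ •
                (opAbs (∑ i, Φ i (B i) - ((m + M) / 2) • 1) +
                  opAbs (∑ i, Φ i (C i) - ((m + M) / 2) • 1))) ≤
        ∑ i, Φ i (cfc f (A i)) + ∑ i, Φ i (cfc f (D i)) :=
  jensen_type_maps_one_general m M hmM J hJmM f hf hconv A B C D hAsa hAspec hDsa hDspec hADBC hA
    hBl hBu hCl hCu hD Φ hΦpos hΦ1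
end
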